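/- arXiv:1405.4672 — 4 statements merged into one kernel-verified Lean document; each statement's English description precedes it below -/
import Mathlib

section
/- Suppose a polynomial f(t) with rational coefficients satisfies f(t) = c + (-1)^n f(-t-1) for constants c and integer n. Define h_i by sum_{i=0}^n h_i t^i = (1-t)^n f(t/(1-t)). Then h_i - h_{n-i} = (-1)^i * binomial(n,i) * c for all 0 <= i <= n, provided deg f <= n. -/
open Polynomial Finset

/-!
Write `H(t) = (1 - t)^n f(t / (1 - t))` for the `h`-polynomial. The substitution `s = t / (1 - t)`
turns `-s - 1` into `1 / (t - 1)`, and `t^n H(1/t) = (t - 1)^n f(1 / (t - 1))`, so the functional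
equation of `f` says exactly that `H(t) = c (1 - t)^n + t^n H(1/t)`. Both sides are polynomials
agreeing at every `t ∉ {0, 1}`, hence equal, and comparing coefficients of `t^i` gives the relation.
-/

namespace Polynomial

section CommRing

variable {R : Type*} [CommRing R]

noncomputable def hPolynomial (n : ℕ) (f : R[X]) : R[X] :=
  ∑ i ∈ range (n + 1), C (f.coeff i) * X ^ i * (1 - X) ^ (n - i)

theorem natDegree_hPolynomial_le (n : ℕ) (f : R[X]) : (hPolynomial n f).natDegree ≤ n := by
  refine natDegree_sum_le_of_forall_le _ _ fun i hi => ?_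
  have hi : i ≤ n := Nat.lt_succ_iff.mp (mem_range.mp hi)
  calc (C (f.coeff i) * X ^ i * (1 - X) ^ (n - i)).natDegree
      ≤ i + (n - i) := by compute_degree
    _ = n := Nat.add_sub_cancel' hi

theorem coeff_sum_range_C_mul_X_pow (a : ℕ → R) {m k : ℕ} (hk : k < m) :
    (∑ i ∈ range m, C (a i) * X ^ i).coeff k = a k := by
  simp [hk]

theorem coeff_one_sub_X_pow (n k : ℕ) :
    ((1 - X : R[X]) ^ n).coeff k = (-1) ^ k * n.choose k := by
  have h : (1 - X : R[X]) ^ n = C ((-1) ^ n) * (X + C (-1)) ^ n := by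
    rw [C_pow, ← mul_pow]; congr 1; simp; ring
  rw [h, coeff_C_mul, coeff_X_add_C_pow]
  rcases le_or_gt k n with hk | hk
  · obtain ⟨m, rfl⟩ := Nat.exists_eq_add_of_le hk
    have hm : ((-1 : R) ^ m) * (-1) ^ m = 1 := by rw [← mul_pow]; simp
    rw [Nat.add_sub_cancel_left, pow_add]
    linear_combination ((-1) ^ k * ((k + m).choose k : R)) * hm
  · simp [Nat.choose_eq_zero_of_lt hk]

end CommRing

section Field

variable {K : Type*} [Field K]

theorem eval_reflect {N : ℕ} {p : K[X]} (hp : p.natDegree ≤ N) {x : K} (hx : x ≠ 0) :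
    (reflect N p).eval x = x ^ N * p.eval x⁻¹ := by
  have := invertibleOfNonzero (inv_ne_zero hx)
  have h := eval₂_reflect_mul_pow (RingHom.id K) x⁻¹ N p hp
  simp only [invOf_eq_inv, inv_inv] at h
  change eval x (reflect N p) * x⁻¹ ^ N = eval x⁻¹ p at h
  rw [← h, inv_pow, mul_comm, inv_mul_cancel_right₀ (pow_ne_zero N hx)]

theorem eval_hPolynomial {n : ℕ} {f : K[X]} (hf : f.natDegree ≤ n) {x : K} (hx : x ≠ 1) :
    (hPolynomial n f).eval x = (1 - x) ^ n * f.eval (x / (1 - x)) := by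
  have hx' : 1 - x ≠ 0 := sub_ne_zero.mpr hx.symm
  rw [hPolynomial, eval_eq_sum_range' (Nat.lt_succ_of_le hf), eval_finsetSum, mul_sum]
  refine sum_congr rfl fun i hi => ?_
  have hi : i ≤ n := Nat.lt_succ_iff.mp (mem_range.mp hi)
  simp only [eval_mul, eval_C, eval_pow, eval_X, eval_sub, eval_one]
  rw [← pow_mul_pow_sub _ hi, div_pow]
  field_simp

theorem hPolynomial_eq_add_reflect [Infinite K] {n : ℕ} {f : K[X]} {c : K}
    (hf : f.natDegree ≤ n) (hfe : f = C c + C ((-1) ^ n) * f.comp (-X - 1)) :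
    hPolynomial n f = C c * (1 - X) ^ n + reflect n (hPolynomial n f) := by
  refine eq_of_infinite_eval_eq _ _ ((Set.toFinite {0, 1}).infinite_compl.mono fun x hx => ?_)
  simp only [Set.mem_compl_iff, Set.mem_insert_iff, Set.mem_singleton_iff, not_or] at hx
  obtain ⟨hx0, hx1⟩ := hx
  have hx' : 1 - x ≠ 0 := sub_ne_zero.mpr (Ne.symm hx1)
  have hinv1 : x⁻¹ ≠ 1 := by simpa using hx1
  have harg : x⁻¹ / (1 - x⁻¹) = -(x / (1 - x)) - 1 := by
    have : x - 1 ≠ 0 := sub_ne_zero.mpr hx1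
    field_simp
    ring
  have hscale : x ^ n * (1 - x⁻¹) ^ n = (-1) ^ n * (1 - x) ^ n := by
    rw [← mul_pow, ← mul_pow]
    congr 1
    field_simp
    ring
  show eval x _ = eval x _
  rw [eval_add, eval_reflect (natDegree_hPolynomial_le n f) hx0, eval_hPolynomial hf hx1,
    eval_hPolynomial hf hinv1, ← mul_assoc, hscale, harg]
  conv_lhs => rw [hfe]
  simp only [eval_add, eval_mul, eval_C, eval_comp, eval_sub, eval_neg, eval_X, eval_one, eval_pow]
  ring

end Field

end Polynomial

/-- Abstract Dehn–Sommerville relations: if a polynomial `f` of degree at most `n`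
satisfies `f(t) = c + (-1)^n f(-t-1)`, and the `h`-numbers are defined by
`∑ h_i t^i = ∑ f.coeff i * t^i * (1-t)^(n-i)` (equivalently `(1-t)^n f(t/(1-t))`),
then `h_i - h_{n-i} = (-1)^i * (n choose i) * c` for all `0 ≤ i ≤ n`. -/
theorem abstract_dehn_sommerville (n : ℕ) (f : Polynomial ℚ) (c : ℚ)
    (hdeg : f.natDegree ≤ n)
    (hfe : f = C c + C ((-1 : ℚ) ^ n) * f.comp (-X - 1))
    (h : ℕ → ℚ)
    (hdef : ∑ i ∈ range (n + 1), C (h i) * X ^ i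
      = ∑ i ∈ range (n + 1), C (f.coeff i) * X ^ i * (1 - X) ^ (n - i)) :
    ∀ i ≤ n, h i - h (n - i) = (-1 : ℚ) ^ i * (n.choose i : ℚ) * c := by
  have hH : hPolynomial n f = ∑ i ∈ range (n + 1), C (h i) * X ^ i := hdef.symm
  have hcoeff : ∀ i ≤ n, (hPolynomial n f).coeff i = h i := fun i hi => by
    rw [hH, coeff_sum_range_C_mul_X_pow h (Nat.lt_succ_of_le hi)]
  intro i hi
  have key := congrArg (coeff · i) (hPolynomial_eq_add_reflect hdeg hfe)
  simp only [coeff_add, coeff_C_mul, coeff_one_sub_X_pow, coeff_reflect, revAt_le hi] at key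
  rw [hcoeff i hi, hcoeff (n - i) (Nat.sub_le n i)] at key
  linear_combination key
end

section
/- Let U be an invertible n×n matrix over a field with V = U^{-1}, and let M, N ⊆ {1,...,n} with |M| = |N| = q. Then det((V_{r,s})_{r∈M, s∈N}) = sgn_{M,N} / det(U) * det((U_{r,s})_{r∈[n]\N, s∈[n]\M}), where sgn_{M,N} = (-1)^{Σ_{r∈[n]\N} r + Σ_{s∈[n]\M} s} (Jacobi's identity on complementary minors). -/
/-!
Let `e, f : Fin q ⊕ Fin (n - q) ≃ Fin n` list `M` then `Mᶜ`, resp. `N` then `Nᶜ`, in increasing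
order. Then `A = U.submatrix f e` has inverse `B = U⁻¹.submatrix e f`, and the two minors are the
blocks `B₁₁` and `A₂₂`. From `A * B = 1` one gets
`A * [[B₁₁, 0], [B₂₁, 1]] = [[1, A₁₂], [0, A₂₂]]`, hence `det B₁₁ * det A = det A₂₂`, while
`det A = sign (e⁻¹ f) * det U`. The sign is `(-1) ^ (∑ M + ∑ N)`: replacing an element `b` of
`M` by `b - 1 ∉ M` changes `e` by the adjacent transposition `(b - 1, b)`, and such moves bring
`M` and `N` to the same initial segment.
-/

open Finset Matrix Equiv

theorem strictMonoOn_swap_of_covBy {α : Type*} [LinearOrder α] [DecidableEq α] {a b : α}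
    (hab : a ⋖ b) {s : Set α} (hs : ¬(a ∈ s ∧ b ∈ s)) : StrictMonoOn (swap a b) s := by
  intro x hx y hy hxy
  have := hab.lt
  have := @hab.ge_of_gt
  have := @hab.le_of_lt
  grind

theorem exists_covBy_of_not_isLowerSet {α : Type*} [LinearOrder α] [SuccOrder α]
    [IsSuccArchimedean α] {s : Set α} (hs : ¬IsLowerSet s) : ∃ a b, a ⋖ b ∧ b ∈ s ∧ a ∉ s := by
  contrapose! hs
  rw [← Set.ofPred_mem_eq (s := s), isLowerSet_setOfPred]
  exact antitone_of_succ_le fun a ha => hs a _ (Order.covBy_succ_of_not_isMax ha)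

namespace Finset

theorem eq_of_isLowerSet_of_card_eq {ι : Type*} [LinearOrder ι] {M N : Finset ι}
    (hM : IsLowerSet (M : Set ι)) (hN : IsLowerSet (N : Set ι)) (h : #M = #N) : M = N := by
  rcases hM.total hN with hMN | hNM
  · exact eq_of_subset_of_card_le (coe_subset.1 hMN) h.ge
  · exact (eq_of_subset_of_card_le (coe_subset.1 hNM) h.le).symm

theorem card_compl_map_equiv {ι : Type*} [Fintype ι] [DecidableEq ι] (e : ι ≃ ι)
    (M : Finset ι) : #(M.map e.toEmbedding)ᶜ = #Mᶜ := by
  rw [card_compl, card_compl, card_map]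

theorem sum_val_map_swap_add_one {n : ℕ} {a b : Fin n} (hab : a ⋖ b) {M : Finset (Fin n)}
    (ha : a ∉ M) (hb : b ∈ M) :
    ∑ x ∈ M.map (swap a b).toEmbedding, (x : ℕ) + 1 = ∑ x ∈ M, (x : ℕ) := by
  have hval : (b : ℕ) = a + 1 := (Nat.covBy_iff_add_one_eq.1 (Fin.covBy_iff.1 hab)).symm
  have hfix : ∀ x ∈ M.erase b, swap a b x = x := fun x hx =>
    swap_apply_of_ne_of_ne (ne_of_mem_of_not_mem (mem_of_mem_erase hx) ha) (ne_of_mem_erase hx)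
  rw [sum_map, ← add_sum_erase M _ hb, ← add_sum_erase M _ hb]
  simp only [coe_toEmbedding, swap_apply_right]
  rw [sum_congr rfl fun x hx => congrArg Fin.val (hfix x hx)]
  omega

theorem sum_compl_val_add_one_add_sum_val_add_card {n : ℕ} (M : Finset (Fin n)) :
    ∑ x ∈ Mᶜ, ((x : ℕ) + 1) + ∑ x ∈ M, (x : ℕ) + #M = ∑ x : Fin n, ((x : ℕ) + 1) := by
  rw [← sum_compl_add_sum M, sum_add_distrib (s := M), sum_const, smul_eq_mul, mul_one, add_assoc]

section Shuffle

variable {ι : Type*} [LinearOrder ι] [Fintype ι] [DecidableEq ι] {q r : ℕ}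

def shuffleEquiv (M : Finset ι) (hM : #M = q) (hMc : #Mᶜ = r) : Fin q ⊕ Fin r ≃ ι :=
  (sumCongr (M.orderIsoOfFin hM).toEquiv
    ((Mᶜ.orderIsoOfFin hMc).toEquiv.trans (subtypeEquivRight fun _ => mem_compl))).trans
    (sumCompl (· ∈ M))

variable (M : Finset ι) (hM : #M = q) (hMc : #Mᶜ = r)

@[simp]
theorem shuffleEquiv_inl (i : Fin q) : M.shuffleEquiv hM hMc (.inl i) = M.orderIsoOfFin hM i :=
  rfl

@[simp]
theorem shuffleEquiv_inr (j : Fin r) : M.shuffleEquiv hM hMc (.inr j) = Mᶜ.orderIsoOfFin hMc j :=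
  rfl

theorem eq_shuffleEquiv {e : Fin q ⊕ Fin r ≃ ι} (hl : StrictMono (e ∘ .inl))
    (hr : StrictMono (e ∘ .inr)) (hmem : ∀ i, e (.inl i) ∈ M) : e = M.shuffleEquiv hM hMc := by
  have hinl : e ∘ .inl = M.orderEmbOfFin hM := orderEmbOfFin_unique hM hmem hl
  have hinr : e ∘ .inr = Mᶜ.orderEmbOfFin hMc := by
    refine orderEmbOfFin_unique hMc (fun j => mem_compl.2 fun hj => ?_) hr
    obtain ⟨i, hi⟩ : e (.inr j) ∈ Set.range (e ∘ .inl) := by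
      rwa [hinl, range_orderEmbOfFin]
    exact Sum.inl_ne_inr (e.injective hi)
  ext (i | j)
  · simpa using congrFun hinl i
  · simpa using congrFun hinr j

theorem shuffleEquiv_trans_swap {a b : ι} (hab : a ⋖ b) (hmem : ¬(a ∈ M ↔ b ∈ M)) :
    (M.shuffleEquiv hM hMc).trans (swap a b) =
      (M.map (swap a b).toEmbedding).shuffleEquiv ((card_map _).trans hM)
        ((card_compl_map_equiv _ M).trans hMc) := by
  apply eq_shuffleEquiv
  · intro i j hij
    exact strictMonoOn_swap_of_covBy hab (s := M) (by tauto) (M.orderEmbOfFin_mem hM i)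
      (M.orderEmbOfFin_mem hM j) ((M.orderEmbOfFin hM).strictMono hij)
  · intro i j hij
    exact strictMonoOn_swap_of_covBy hab (s := ↑Mᶜ) (by simp; tauto)
      (Mᶜ.orderEmbOfFin_mem hMc i) (Mᶜ.orderEmbOfFin_mem hMc j)
      ((Mᶜ.orderEmbOfFin hMc).strictMono hij)
  · intro i
    simp [M.orderEmbOfFin_mem hM i]

end Shuffle

section Sign

variable {n q r : ℕ} {M N : Finset (Fin n)} (hM : #M = q) (hN : #N = q) (hMc : #Mᶜ = r)
  (hNc : #Nᶜ = r)

theorem sign_shuffleEquiv_symm_trans_comm :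
    Perm.sign ((N.shuffleEquiv hN hNc).symm.trans (M.shuffleEquiv hM hMc)) =
      Perm.sign ((M.shuffleEquiv hM hMc).symm.trans (N.shuffleEquiv hN hNc)) := by
  rw [← Perm.sign_symm, symm_trans, symm_symm]

theorem sign_shuffleEquiv_symm_trans_of_map_swap {a b : Fin n} (hab : a ⋖ b) (hb : b ∈ N)
    (ha : a ∉ N)
    (h : Perm.sign ((M.shuffleEquiv hM hMc).symm.trans
        ((N.map (swap a b).toEmbedding).shuffleEquiv ((card_map _).trans hN)
          ((card_compl_map_equiv _ N).trans hNc))) =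
      (-1) ^ (∑ x ∈ M, (x : ℕ) + ∑ x ∈ N.map (swap a b).toEmbedding, (x : ℕ))) :
    Perm.sign ((M.shuffleEquiv hM hMc).symm.trans (N.shuffleEquiv hN hNc)) =
      (-1) ^ (∑ x ∈ M, (x : ℕ) + ∑ x ∈ N, (x : ℕ)) := by
  rw [← shuffleEquiv_trans_swap N hN hNc hab (by tauto), ← trans_assoc, ← Perm.mul_def,
    Perm.sign_mul, Perm.sign_swap hab.ne] at h
  rw [← sum_val_map_swap_add_one hab ha hb, ← add_assoc, pow_succ, ← h]
  simp

theorem sign_shuffleEquiv_symm_trans :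
    Perm.sign ((M.shuffleEquiv hM hMc).symm.trans (N.shuffleEquiv hN hNc)) =
      (-1) ^ (∑ x ∈ M, (x : ℕ) + ∑ x ∈ N, (x : ℕ)) := by
  induction hk : ∑ x ∈ M, (x : ℕ) + ∑ x ∈ N, (x : ℕ) using Nat.strong_induction_on
    generalizing M N with
  | _ k ih =>
  subst hk
  by_cases hNl : IsLowerSet (N : Set (Fin n))
  · by_cases hMl : IsLowerSet (M : Set (Fin n))
    · obtain rfl := eq_of_isLowerSet_of_card_eq hMl hNl (hM.trans hN.symm)
      simp [← two_mul]
    · obtain ⟨a, b, hab, hb, ha⟩ := exists_covBy_of_not_isLowerSet hMl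
      rw [← sign_shuffleEquiv_symm_trans_comm, add_comm]
      refine sign_shuffleEquiv_symm_trans_of_map_swap hN hM hNc hMc hab hb ha
        (ih _ ?_ _ _ _ _ rfl)
      have := sum_val_map_swap_add_one hab ha hb
      omega
  · obtain ⟨a, b, hab, hb, ha⟩ := exists_covBy_of_not_isLowerSet hNl
    refine sign_shuffleEquiv_symm_trans_of_map_swap hM hN hMc hNc hab hb ha
      (ih _ ?_ _ _ _ _ rfl)
    have := sum_val_map_swap_add_one hab ha hb
    omega

end Sign

end Finset

namespace Matrix

variable {m p ι R : Type*} [Fintype m] [Fintype p] [Fintype ι] [DecidableEq m] [DecidableEq p]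
  [DecidableEq ι] [CommRing R]

theorem det_toBlocks₁₁_mul_det_of_mul_eq_one {A B : Matrix (m ⊕ p) (m ⊕ p) R} (h : A * B = 1) :
    B.toBlocks₁₁.det * A.det = A.toBlocks₂₂.det := by
  rw [← fromBlocks_toBlocks A, ← fromBlocks_toBlocks B, fromBlocks_multiply, ← fromBlocks_one]
    at h
  obtain ⟨h₁₁, -, h₂₁, -⟩ := fromBlocks_inj.1 h
  have hfactor : A * fromBlocks B.toBlocks₁₁ 0 B.toBlocks₂₁ 1 =
      fromBlocks 1 A.toBlocks₁₂ 0 A.toBlocks₂₂ := by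
    conv_lhs => rw [← fromBlocks_toBlocks A]
    rw [fromBlocks_multiply]
    simp [h₁₁, h₂₁]
  simpa [det_fromBlocks_zero₁₂, det_fromBlocks_zero₂₁, mul_comm] using congrArg det hfactor

theorem det_submatrix_inv_inl_mul_sign_mul_det (U : Matrix ι ι R) (hU : IsUnit U.det)
    (e f : m ⊕ p ≃ ι) :
    (U⁻¹.submatrix (e ∘ .inl) (f ∘ .inl)).det * (Perm.sign (e.symm.trans f) * U.det) =
      (U.submatrix (f ∘ .inr) (e ∘ .inr)).det := by
  have hmul : U.submatrix f e * U⁻¹.submatrix e f = 1 := by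
    rw [submatrix_mul_equiv, mul_nonsing_inv U hU, submatrix_one_equiv]
  have hdet : (U.submatrix f e).det = Perm.sign (e.symm.trans f) * U.det :=
    det_reindex f.symm e.symm U
  rw [← hdet]
  exact det_toBlocks₁₁_mul_det_of_mul_eq_one hmul

end Matrix

/-- Jacobi's identity on complementary minors: if `U` is an invertible `n × n` matrix over a
field with inverse `V = U⁻¹`, and `M, N ⊆ {1,…,n}` with `|M| = |N| = q`, then
`det (V_{r,s})_{r∈M, s∈N} = sgn_{M,N} / det U * det (U_{r,s})_{r∈[n]∖N, s∈[n]∖M}`,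
where `sgn_{M,N} = (-1)^{∑_{r∈[n]∖N} r + ∑_{s∈[n]∖M} s}` (1-based indices). -/
theorem jacobi_complementary_minors {K : Type} [Field K] (n q : ℕ)
    (U : Matrix (Fin n) (Fin n) K) (hU : IsUnit U.det)
    (M N : Finset (Fin n)) (hM : M.card = q) (hN : N.card = q)
    (hMc : Mᶜ.card = n - q) (hNc : Nᶜ.card = n - q) :
    Matrix.det ((U⁻¹).submatrix
        (fun i : Fin q => (M.orderIsoOfFin hM i : Fin n))
        (fun j : Fin q => (N.orderIsoOfFin hN j : Fin n)))
      = (-1 : K) ^ ((∑ r ∈ Nᶜ, ((r : ℕ) + 1)) + ∑ s ∈ Mᶜ, ((s : ℕ) + 1)) / U.det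
        * Matrix.det (U.submatrix
            (fun i : Fin (n - q) => (Nᶜ.orderIsoOfFin hNc i : Fin n))
            (fun j : Fin (n - q) => (Mᶜ.orderIsoOfFin hMc j : Fin n))) := by
  have hjacobi := det_submatrix_inv_inl_mul_sign_mul_det U hU
    (M.shuffleEquiv hM hMc) (N.shuffleEquiv hN hNc)
  simp only [sign_shuffleEquiv_symm_trans, Function.comp_def, shuffleEquiv_inl,
    shuffleEquiv_inr] at hjacobi
  have hsign : (-1 : K) ^ ((∑ r ∈ Nᶜ, ((r : ℕ) + 1)) + ∑ s ∈ Mᶜ, ((s : ℕ) + 1)) =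
      (-1) ^ (∑ x ∈ M, (x : ℕ) + ∑ x ∈ N, (x : ℕ)) := by
    rw [neg_one_pow_eq_pow_mod_two, neg_one_pow_eq_pow_mod_two (∑ x ∈ M, (x : ℕ) + _)]
    have := M.sum_compl_val_add_one_add_sum_val_add_card
    have := N.sum_compl_val_add_one_add_sum_val_add_card
    congr 1
    omega
  rw [hsign, div_mul_eq_mul_div, eq_div_iff hU.ne_zero, ← hjacobi]
  push_cast
  rw [mul_left_comm, ← mul_assoc ((-1 : K) ^ _), ← pow_add, Even.neg_one_pow ⟨_, rfl⟩, one_mul]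
end

section
/- Let S be a simplicial poset of dimension n-1, I ∈ S a nonempty element, and W a k-module. Define the sheaf Υ_I^W on S by Υ_I^W(J) = W if J ≥ I and 0 otherwise, with restriction maps the identity on W when defined. Then the sheaf cohomology H^*(S; Υ_I^W) is isomorphic to H^{*-|I|}(lk_S I; W), the shifted cohomology of the link of I with constant coefficients W. -/
open Finset DirectSum

noncomputable section

variable {R : Type} [CommRing R] {α : Type} [Fintype α] [PartialOrder α] [DecidableEq α]
  [DecidableRel ((· ≤ ·) : α → α → Prop)]

/-- The cochain group `⊕_{rank J = i} A(J)` of a cellular sheaf `A` (graded by rank). -/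
def sheafCochain (rank : α → ℕ) (A : α → Type) [∀ I, AddCommGroup (A I)]
    [∀ I, Module R (A I)] (i : ℕ) : Type :=
  ⨁ I : {I : α // rank I = i}, A I.1

instance (rank : α → ℕ) (A : α → Type) [∀ I, AddCommGroup (A I)] [∀ I, Module R (A I)]
    (i : ℕ) : AddCommGroup (sheafCochain (R := R) rank A i) := by
  unfold sheafCochain; infer_instance

instance (rank : α → ℕ) (A : α → Type) [∀ I, AddCommGroup (A I)] [∀ I, Module R (A I)]
    (i : ℕ) : Module R (sheafCochain (R := R) rank A i) := by
  unfold sheafCochain; infer_instance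

/-- The differential of the cochain complex of a cellular sheaf `A`,
`d = ⊕ [I':I] A(I ≤ I')`. -/
def sheafDifferential (rank : α → ℕ) (A : α → Type) [∀ I, AddCommGroup (A I)]
    [∀ I, Module R (A I)] (res : ∀ I J : α, I ≤ J → A I →ₗ[R] A J)
    (inc : α → α → R) (i : ℕ) :
    sheafCochain (R := R) rank A i →ₗ[R] sheafCochain (R := R) rank A (i + 1) :=
  DirectSum.toModule R _ _ (fun I : {I : α // rank I = i} =>
    ∑ J ∈ (Finset.univ.filter
        (fun J : {J : α // rank J = i + 1} => I.1 ≤ J.1)).attach,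
      inc J.1.1 I.1 •
        ((DirectSum.lof R {J : α // rank J = i + 1} (fun J => A J.1) J.1).comp
          (res I.1 J.1.1 (Finset.mem_filter.mp J.2).2)))

/-- The cochain group of the constant sheaf `W` on the link `lk_S I₀` (graded by link rank;
degree `0` is the minimal element `I₀` of the link itself). -/
def linkCochain (rank : α → ℕ) (I₀ : α) (s' : ℕ) (W : Type) [AddCommGroup W] [Module R W]
    (ρ : ℕ) : Type :=
  ⨁ _J : {J : α // I₀ ≤ J ∧ rank J = s' + 1 + ρ}, W

instance (rank : α → ℕ) (I₀ : α) (s' : ℕ) (W : Type) [AddCommGroup W] [Module R W] (ρ : ℕ) :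
    AddCommGroup (linkCochain (R := R) rank I₀ s' W ρ) := by
  unfold linkCochain; infer_instance

instance (rank : α → ℕ) (I₀ : α) (s' : ℕ) (W : Type) [AddCommGroup W] [Module R W] (ρ : ℕ) :
    Module R (linkCochain (R := R) rank I₀ s' W ρ) := by
  unfold linkCochain; infer_instance

/-- The differential of the cochain complex of the constant sheaf `W` on the link `lk_S I₀`:
all restriction maps are identities, weighted by the incidence numbers. -/
def linkDifferential (rank : α → ℕ) (I₀ : α) (s' : ℕ) (W : Type) [AddCommGroup W]
    [Module R W] (inc : α → α → R) (ρ : ℕ) :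
    linkCochain (R := R) rank I₀ s' W ρ →ₗ[R] linkCochain (R := R) rank I₀ s' W (ρ + 1) :=
  DirectSum.toModule R _ _ (fun J : {J : α // I₀ ≤ J ∧ rank J = s' + 1 + ρ} =>
    ∑ J' ∈ (Finset.univ.filter
        (fun J' : {J' : α // I₀ ≤ J' ∧ rank J' = s' + 1 + (ρ + 1)} => J.1 ≤ J'.1)).attach,
      inc J'.1.1 J.1 •
        (DirectSum.lof R {J' : α // I₀ ≤ J' ∧ rank J' = s' + 1 + (ρ + 1)} (fun _ => W) J'.1))


/-!
The sheaf `Υ_{I₀}^W` vanishes off the upper set `{J | I₀ ≤ J}` and is identified with `W` on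
it, so its cochain group in degree `i` is `⊕_{J ≥ I₀, rank J = i} W`, which is the cochain group
of the link in degree `i - rank I₀`. Since the identifications `e` turn every restriction map into
the identity, this isomorphism commutes with the differentials. In the lowest degree `rank I₀`
no sheaf cochain of smaller degree survives (nothing of smaller rank lies above `I₀`), so there
the cohomology is the kernel itself, matching the link's degree-`0` cocycles.
-/

set_option linter.unusedSectionVars false

section ChainIsomorphism

variable {k : Type*} [Ring k] {L M N L' M' N' : Type*}
  [AddCommGroup L] [Module k L] [AddCommGroup M] [Module k M] [AddCommGroup N] [Module k N]
  [AddCommGroup L'] [Module k L'] [AddCommGroup M'] [Module k M'] [AddCommGroup N'] [Module k N']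

theorem map_ker_eq_of_comp_eq {g : M →ₗ[k] N} {g' : M' →ₗ[k] N'} (eM : M ≃ₗ[k] M')
    (eN : N ≃ₗ[k] N') (h : g' ∘ₗ eM.toLinearMap = eN.toLinearMap ∘ₗ g) :
    (LinearMap.ker g).map eM.toLinearMap = LinearMap.ker g' := by
  rw [← LinearEquiv.ker_comp eN g, ← h, LinearMap.ker_comp,
    Submodule.map_comap_eq_of_surjective eM.surjective]

theorem map_range_eq_of_comp_eq {f : L →ₗ[k] M} {f' : L' →ₗ[k] M'} (eL : L ≃ₗ[k] L')
    (eM : M ≃ₗ[k] M') (h : f' ∘ₗ eL.toLinearMap = eM.toLinearMap ∘ₗ f) :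
    (LinearMap.range f).map eM.toLinearMap = LinearMap.range f' := by
  rw [← LinearMap.range_comp, ← h, LinearEquiv.range_comp]

theorem comap_subtype_range_eq_bot [Subsingleton L] (f : L →ₗ[k] M) (p : Submodule k M) :
    (LinearMap.range f).comap p.subtype = ⊥ := by
  rw [LinearMap.range_eq_bot.mpr (Subsingleton.elim _ _), Submodule.comap_bot,
    Submodule.ker_subtype]

def kerEquivOfComm {g : M →ₗ[k] N} {g' : M' →ₗ[k] N'} (eM : M ≃ₗ[k] M') (eN : N ≃ₗ[k] N')
    (h : g' ∘ₗ eM.toLinearMap = eN.toLinearMap ∘ₗ g) :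
    LinearMap.ker g ≃ₗ[k] LinearMap.ker g' :=
  eM.ofSubmodules _ _ (map_ker_eq_of_comp_eq eM eN h)

def cohomologyEquivOfComm {f : L →ₗ[k] M} {g : M →ₗ[k] N} {f' : L' →ₗ[k] M'}
    {g' : M' →ₗ[k] N'} (eL : L ≃ₗ[k] L') (eM : M ≃ₗ[k] M') (eN : N ≃ₗ[k] N')
    (hf : f' ∘ₗ eL.toLinearMap = eM.toLinearMap ∘ₗ f)
    (hg : g' ∘ₗ eM.toLinearMap = eN.toLinearMap ∘ₗ g) :
    (LinearMap.ker g ⧸ (LinearMap.range f).comap (LinearMap.ker g).subtype) ≃ₗ[k]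
      (LinearMap.ker g' ⧸ (LinearMap.range f').comap (LinearMap.ker g').subtype) :=
  Submodule.Quotient.equiv _ _ (kerEquivOfComm eM eN hg) <| by
    ext x
    simp only [Submodule.mem_map_equiv, Submodule.mem_comap, Submodule.subtype_apply,
      ← map_range_eq_of_comp_eq eL eM hf]
    rfl

end ChainIsomorphism

section UpsSheaf

variable (rank : α → ℕ) {A : α → Type} [∀ I, AddCommGroup (A I)] [∀ I, Module R (A I)]
  {I₀ : α} {s' : ℕ} {W : Type} [AddCommGroup W] [Module R W]

def toLinkCochain (e : ∀ J : α, I₀ ≤ J → (A J ≃ₗ[R] W)) {i ρ : ℕ} (hi : i = s' + 1 + ρ) :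
    sheafCochain (R := R) rank A i →ₗ[R] linkCochain (R := R) rank I₀ s' W ρ :=
  toModule R _ _ fun I =>
    if h : I₀ ≤ I.1 then lof R _ (fun _ => W) ⟨I.1, h, I.2.trans hi⟩ ∘ₗ (e I.1 h).toLinearMap
    else 0

def ofLinkCochain (e : ∀ J : α, I₀ ≤ J → (A J ≃ₗ[R] W)) {i ρ : ℕ} (hi : i = s' + 1 + ρ) :
    linkCochain (R := R) rank I₀ s' W ρ →ₗ[R] sheafCochain (R := R) rank A i :=
  toModule R _ _ fun J =>
    lof R {I : α // rank I = i} (fun I => A I.1) ⟨J.1, J.2.2.trans hi.symm⟩ ∘ₗ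
      (e J.1 J.2.1).symm.toLinearMap

variable {rank}

theorem toLinkCochain_lof (e : ∀ J : α, I₀ ≤ J → (A J ≃ₗ[R] W)) {i ρ : ℕ}
    (hi : i = s' + 1 + ρ) (I : {I : α // rank I = i}) (h : I₀ ≤ I.1) (x : A I.1) :
    toLinkCochain rank e hi (lof R {I : α // rank I = i} (fun I => A I.1) I x) =
      lof R _ (fun _ => W) ⟨I.1, h, I.2.trans hi⟩ (e I.1 h x) := by
  rw [toLinkCochain]
  erw [toModule_lof, dif_pos h]
  rfl

theorem ofLinkCochain_lof (e : ∀ J : α, I₀ ≤ J → (A J ≃ₗ[R] W)) {i ρ : ℕ}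
    (hi : i = s' + 1 + ρ) (J : {J : α // I₀ ≤ J ∧ rank J = s' + 1 + ρ}) (x : W) :
    ofLinkCochain rank e hi (lof R _ (fun _ => W) J x) =
      lof R {I : α // rank I = i} (fun I => A I.1) ⟨J.1, J.2.2.trans hi.symm⟩
        ((e J.1 J.2.1).symm x) := by
  rw [ofLinkCochain]
  erw [toModule_lof]
  rfl

variable (rank) in
def upsCochainEquiv (e : ∀ J : α, I₀ ≤ J → (A J ≃ₗ[R] W))
    (hzero : ∀ J : α, ¬ I₀ ≤ J → Subsingleton (A J)) {i ρ : ℕ} (hi : i = s' + 1 + ρ) :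
    sheafCochain (R := R) rank A i ≃ₗ[R] linkCochain (R := R) rank I₀ s' W ρ :=
  LinearEquiv.ofLinearMap (toLinkCochain rank e hi) (ofLinkCochain rank e hi)
    (linearMap_ext R fun J => LinearMap.ext fun x => by
      change toLinkCochain rank e hi (ofLinkCochain rank e hi (lof R _ (fun _ => W) J x)) = _
      erw [ofLinkCochain_lof, toLinkCochain_lof e hi _ J.2.1, LinearEquiv.apply_symm_apply]
      rfl)
    (linearMap_ext R fun I => LinearMap.ext fun x => by
      by_cases h : I₀ ≤ I.1
      · change ofLinkCochain rank e hi (toLinkCochain rank e hi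
          (lof R {I : α // rank I = i} (fun I => A I.1) I x)) = _
        erw [toLinkCochain_lof e hi I h, ofLinkCochain_lof, LinearEquiv.symm_apply_apply]
        rfl
      · have := hzero I.1 h
        rw [Subsingleton.elim x 0, map_zero, map_zero])

theorem sheafDifferential_lof (res : ∀ I J : α, I ≤ J → A I →ₗ[R] A J) (inc : α → α → R)
    {i : ℕ} (I : {I : α // rank I = i}) (x : A I.1) :
    sheafDifferential (R := R) rank A res inc i (lof R _ (fun I => A I.1) I x) =
      ∑ J ∈ (univ.filter fun J : {J : α // rank J = i + 1} => I.1 ≤ J.1).attach,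
        inc J.1.1 I.1 • lof R _ (fun J => A J.1) J.1 (res I.1 J.1.1 (mem_filter.mp J.2).2 x) := by
  rw [sheafDifferential]
  erw [toModule_lof, LinearMap.sum_apply]
  rfl

theorem linkDifferential_lof (inc : α → α → R) {ρ : ℕ}
    (J : {J : α // I₀ ≤ J ∧ rank J = s' + 1 + ρ}) (x : W) :
    linkDifferential (R := R) rank I₀ s' W inc ρ (lof R _ (fun _ => W) J x) =
      ∑ J' ∈ (univ.filter
          fun J' : {J' : α // I₀ ≤ J' ∧ rank J' = s' + 1 + (ρ + 1)} => J.1 ≤ J'.1).attach,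
        inc J'.1.1 J.1 • lof R _ (fun _ => W) J'.1 x := by
  rw [linkDifferential]
  erw [toModule_lof, LinearMap.sum_apply]
  rfl

theorem linkDifferential_comp_toLinkCochain (res : ∀ I J : α, I ≤ J → A I →ₗ[R] A J)
    (inc : α → α → R) (e : ∀ J : α, I₀ ≤ J → (A J ≃ₗ[R] W))
    (hzero : ∀ J : α, ¬ I₀ ≤ J → Subsingleton (A J))
    (hcompat : ∀ (J J' : α) (h : I₀ ≤ J) (h' : J ≤ J') (x : A J),
      e J' (h.trans h') (res J J' h' x) = e J h x)
    {i ρ : ℕ} (hi : i = s' + 1 + ρ) (hi' : i + 1 = s' + 1 + (ρ + 1)) :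
    linkDifferential (R := R) rank I₀ s' W inc ρ ∘ₗ toLinkCochain rank e hi =
      toLinkCochain rank e hi' ∘ₗ sheafDifferential (R := R) rank A res inc i := by
  refine linearMap_ext R fun I => LinearMap.ext fun x => ?_
  by_cases h : I₀ ≤ I.1
  swap
  · have := hzero I.1 h
    rw [Subsingleton.elim x 0, map_zero, map_zero]
  change linkDifferential (R := R) rank I₀ s' W inc ρ
      (toLinkCochain rank e hi (lof R {I : α // rank I = i} (fun I => A I.1) I x)) =
    toLinkCochain rank e hi' (sheafDifferential (R := R) rank A res inc i
      (lof R {I : α // rank I = i} (fun I => A I.1) I x))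
  erw [toLinkCochain_lof e hi I h, linkDifferential_lof, sheafDifferential_lof, map_sum]
  -- The cofaces of `I` in the link are those in `S`, and `hcompat` turns `e J ∘ res` into `e I`.
  refine sum_bij'
    (fun J _ => ⟨⟨J.1.1, J.1.2.2.trans hi'.symm⟩,
      mem_filter.mpr ⟨mem_univ _, (mem_filter.mp J.2).2⟩⟩)
    (fun J _ => ⟨⟨J.1.1, h.trans (mem_filter.mp J.2).2, J.1.2.trans hi'⟩,
      mem_filter.mpr ⟨mem_univ _, (mem_filter.mp J.2).2⟩⟩)
    (fun _ _ => mem_attach _ _) (fun _ _ => mem_attach _ _) (fun _ _ => rfl) (fun _ _ => rfl)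
    fun J _ => ?_
  erw [map_smul, toLinkCochain_lof e hi' _ (h.trans (mem_filter.mp J.2).2), hcompat]
  rfl

theorem subsingleton_sheafCochain_of_lt_rank (hmono : StrictMono rank)
    (hzero : ∀ J : α, ¬ I₀ ≤ J → Subsingleton (A J)) {i : ℕ} (hi : i < rank I₀) :
    Subsingleton (sheafCochain (R := R) rank A i) := by
  have (I : {I : α // rank I = i}) : Subsingleton (A I.1) :=
    hzero I.1 fun hle => (hmono.monotone hle).not_gt (by rwa [I.2])
  unfold sheafCochain
  infer_instance

end UpsSheaf

theorem cohomology_of_ups_sheaf_eq_link_general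
    (rank : α → ℕ)
    (hmono : ∀ I J : α, I < J → rank I < rank J)
    (inc : α → α → R)
    (I₀ : α) (s' : ℕ) (hs : rank I₀ = s' + 1)
    (W : Type) [AddCommGroup W] [Module R W]
    (A : α → Type) [∀ I, AddCommGroup (A I)] [∀ I, Module R (A I)]
    (res : ∀ I J : α, I ≤ J → A I →ₗ[R] A J)
    (e : ∀ J : α, I₀ ≤ J → (A J ≃ₗ[R] W))
    (hzero : ∀ J : α, ¬ I₀ ≤ J → Subsingleton (A J))
    (hcompat : ∀ (J J' : α) (h : I₀ ≤ J) (h' : J ≤ J') (x : A J),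
      e J' (h.trans h') (res J J' h' x) = e J h x) :
    Nonempty
        ((LinearMap.ker (sheafDifferential (R := R) rank A res inc (s' + 1)) ⧸
            Submodule.comap
              (LinearMap.ker (sheafDifferential (R := R) rank A res inc (s' + 1))).subtype
              (LinearMap.range (sheafDifferential (R := R) rank A res inc s')))
          ≃ₗ[R] LinearMap.ker (linkDifferential (R := R) rank I₀ s' W inc 0))
    ∧ ∀ r : ℕ,
        Nonempty
          ((LinearMap.ker (sheafDifferential (R := R) rank A res inc (s' + r + 2)) ⧸
              Submodule.comap
                (LinearMap.ker (sheafDifferential (R := R) rank A res inc (s' + r + 2))).subtype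
                (LinearMap.range (sheafDifferential (R := R) rank A res inc (s' + r + 1))))
            ≃ₗ[R]
            (LinearMap.ker (linkDifferential (R := R) rank I₀ s' W inc (r + 1)) ⧸
              Submodule.comap
                (LinearMap.ker (linkDifferential (R := R) rank I₀ s' W inc (r + 1))).subtype
                (LinearMap.range (linkDifferential (R := R) rank I₀ s' W inc r)))) := by
  let E {i ρ : ℕ} (hi : i = s' + 1 + ρ) := upsCochainEquiv rank e hzero hi
  have hd {i ρ : ℕ} (hi : i = s' + 1 + ρ) (hi' : i + 1 = s' + 1 + (ρ + 1)) :=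
    linkDifferential_comp_toLinkCochain (rank := rank) res inc e hzero hcompat hi hi'
  have : Subsingleton (sheafCochain (R := R) rank A s') :=
    subsingleton_sheafCochain_of_lt_rank hmono hzero (by omega)
  refine ⟨⟨(Submodule.quotEquivOfEqBot _ (comap_subtype_range_eq_bot _ _)).trans
    (kerEquivOfComm (E (i := s' + 1) (ρ := 0) rfl) (E rfl) (hd rfl rfl))⟩, fun r => ⟨?_⟩⟩
  exact cohomologyEquivOfComm (E (ρ := r) (by omega)) (E (by omega)) (E (by omega))
    (hd (by omega) (by omega)) (hd (by omega) (by omega))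

/-- Let `S` be a simplicial poset of dimension `n-1` with a sign convention, `I₀ ∈ S` a
nonempty element of rank `|I₀| = s' + 1`, and `W` an `R`-module.  Let `A` be the sheaf
`Υ_{I₀}^W` on `S`: `A(J) ≅ W` for `J ≥ I₀` (with identity restriction maps) and `A(J) = 0`
otherwise.  Then the sheaf cohomology `H^*(S; Υ_{I₀}^W)` is isomorphic to the cohomology
`H^{* - |I₀|}(lk_S I₀; W)` of the link of `I₀` with constant coefficients `W`
(degrees matched under the shift by `|I₀|`). -/
theorem cohomology_of_ups_sheaf_eq_link
    [DecidableRel ((· < ·) : α → α → Prop)]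
    (rank : α → ℕ) (bot : α) (hbot : ∀ I, bot ≤ I) (hrankbot : rank bot = 0)
    (hbool : ∀ I : α, Nonempty ({J : α // J ≤ I} ≃o Finset (Fin (rank I))))
    (hmono : ∀ I J : α, I < J → rank I < rank J)
    (n : ℕ) (hdim : ∀ I, rank I ≤ n)
    (inc : α → α → R)
    (hpm : ∀ I J : α, I < J → rank J = rank I + 1 → inc J I = 1 ∨ inc J I = -1)
    (hsign : ∀ I J J' J'' : α, I < J → rank J = rank I + 2 →
      I < J' → J' < J → I < J'' → J'' < J → J' ≠ J'' →
      inc J J' * inc J' I + inc J J'' * inc J'' I = 0)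
    (I₀ : α) (hI₀ : I₀ ≠ bot) (s' : ℕ) (hs : rank I₀ = s' + 1)
    (W : Type) [AddCommGroup W] [Module R W]
    (A : α → Type) [∀ I, AddCommGroup (A I)] [∀ I, Module R (A I)]
    (res : ∀ I J : α, I ≤ J → A I →ₗ[R] A J)
    (hres : ∀ (I J L : α) (h1 : I ≤ J) (h2 : J ≤ L),
      (res J L h2).comp (res I J h1) = res I L (h1.trans h2))
    (e : ∀ J : α, I₀ ≤ J → (A J ≃ₗ[R] W))
    (hzero : ∀ J : α, ¬ I₀ ≤ J → Subsingleton (A J))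
    (hcompat : ∀ (J J' : α) (h : I₀ ≤ J) (h' : J ≤ J') (x : A J),
      e J' (h.trans h') (res J J' h' x) = e J h x) :
    Nonempty
        ((LinearMap.ker (sheafDifferential (R := R) rank A res inc (s' + 1)) ⧸
            Submodule.comap
              (LinearMap.ker (sheafDifferential (R := R) rank A res inc (s' + 1))).subtype
              (LinearMap.range (sheafDifferential (R := R) rank A res inc s')))
          ≃ₗ[R] LinearMap.ker (linkDifferential (R := R) rank I₀ s' W inc 0))
    ∧ ∀ r : ℕ,
        Nonempty
          ((LinearMap.ker (sheafDifferential (R := R) rank A res inc (s' + r + 2)) ⧸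
              Submodule.comap
                (LinearMap.ker (sheafDifferential (R := R) rank A res inc (s' + r + 2))).subtype
                (LinearMap.range (sheafDifferential (R := R) rank A res inc (s' + r + 1))))
            ≃ₗ[R]
            (LinearMap.ker (linkDifferential (R := R) rank I₀ s' W inc (r + 1)) ⧸
              Submodule.comap
                (LinearMap.ker (linkDifferential (R := R) rank I₀ s' W inc (r + 1))).subtype
                (LinearMap.range (linkDifferential (R := R) rank I₀ s' W inc r)))) :=
  cohomology_of_ups_sheaf_eq_link_general rank hmono inc I₀ s' hs W A res e hzero hcompat
end
end

section
/- Let S be a Buchsbaum simplicial poset of dimension n-1 and define f~_k(S) = Σ_{I∈S, dim I = k} dim H~_{n-1-|I|}(lk_S I) for k ≥ 0. Then the f-polynomial satisfies f_S(t) = (1 - chi(S)) + (-1)^n Σ_{k≥0} f~_k(S) · (-t-1)^{k+1}. -/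
open Polynomial Finset

/-!
Since every lower interval of `S` is Boolean, `t ^ |J| = ((t + 1) - 1) ^ |J|` expands as a sum
over the faces `I ≤ J`; regrouping by `I` gives the Taylor expansion of `f_S` at `-1`,
`f_S(t) = ∑_I f_{lk I}(-1) (t + 1) ^ |I|`. The coefficient of the empty face is
`f_S(-1) = 1 - χ(S)`, and for `I ≠ ∅` the Euler–Poincaré relation turns `f_{lk I}(-1)` into the
alternating sum of the Betti numbers of `lk_S I`, of which the Buchsbaum condition leaves only
`± dim H~_{n-1-|I|}(lk_S I)`.
-/

section BooleanIntervals

variable {α : Type*} [PartialOrder α] {rank : α → ℕ}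

lemma rank_eq_card_of_orderIso
    (hbool : ∀ I : α, Nonempty ({J : α // J ≤ I} ≃o Finset (Fin (rank I))))
    {J : α} (e : {K : α // K ≤ J} ≃o Finset (Fin (rank J))) (K : {K : α // K ≤ J}) :
    rank K = (e K).card := by
  classical
  obtain ⟨eK⟩ := hbool K
  have hIic : {K' : α // K' ≤ K} ≃ {s : Finset (Fin (rank J)) // s ⊆ e K} :=
    (Equiv.subtypeSubtypeEquivSubtype fun hK' => hK'.trans K.2).symm.trans
      (e.toEquiv.subtypeEquiv fun _ => e.le_iff_le.symm)
  have hcard : 2 ^ rank K = 2 ^ (e K).card := by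
    rw [← Fintype.card_fin (rank K), ← Fintype.card_finset, ← Nat.card_eq_fintype_card,
      ← Nat.card_congr eK.toEquiv, Nat.card_congr hIic, Nat.card_eq_fintype_card,
      Fintype.card_subtype, filter_subset_univ, card_powerset]
  exact Nat.pow_right_injective le_rfl hcard

lemma pow_rank_eq_sum_le {R : Type*} [CommRing R] [Fintype α]
    [DecidableRel ((· ≤ ·) : α → α → Prop)]
    (hbool : ∀ I : α, Nonempty ({J : α // J ≤ I} ≃o Finset (Fin (rank I))))
    (x : R) (J : α) :
    x ^ rank J = ∑ I ∈ univ.filter (· ≤ J), (x + 1) ^ rank I * (-1) ^ (rank J - rank I) := by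
  obtain ⟨e⟩ := hbool J
  calc x ^ rank J = ∑ s : Finset (Fin (rank J)), (x + 1) ^ #s * (-1) ^ (rank J - #s) := by
        simpa using (Fintype.sum_pow_mul_eq_add_pow (Fin (rank J)) (x + 1) (-1)).symm
    _ = ∑ I : {K : α // K ≤ J}, (x + 1) ^ rank I * (-1) ^ (rank J - rank I) :=
        (Fintype.sum_equiv e.toEquiv _ _ fun I => by
          rw [rank_eq_card_of_orderIso hbool e]; rfl).symm
    _ = _ := by rw [sum_subtype _ fun _ => mem_filter_univ _]

end BooleanIntervals

lemma sum_eq_sum_range_sum_rank_eq {α M : Type*} [Fintype α] [AddCommMonoid M] {rank : α → ℕ}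
    {n : ℕ} (hdim : ∀ I, rank I ≤ n) (f : α → M) :
    ∑ I, f I = ∑ k ∈ range (n + 1), ∑ I ∈ univ.filter (fun I => rank I = k), f I :=
  (sum_fiberwise_of_maps_to (fun I _ => mem_range.2 (Nat.lt_succ_of_le (hdim I))) f).symm

lemma sub_alternating_sum_eq_of_concentrated (c : ℤ → ℕ) {m n : ℕ} (hm : m ≤ n + 1)
    (hc : ∀ i : ℤ, i ≠ m - 1 → c i = 0) :
    (c (-1) : ℚ) - ∑ i ∈ range (n + 1), (-1) ^ i * (c i : ℚ) = (-1) ^ m * c (m - 1) := by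
  cases m with
  | zero =>
    rw [sum_eq_zero fun i _ => by rw [hc i (by omega)]; simp]
    simp
  | succ k =>
    rw [hc (-1) (by omega), sum_eq_single_of_mem k (mem_range.2 (by omega))
      fun i _ _ => by rw [hc i (by omega)]; simp, Nat.cast_succ, add_sub_cancel_right, pow_succ]
    ring

section Rank

variable {α : Type*} [PartialOrder α] {rank : α → ℕ} {bot : α}

lemma rank_eq_zero_iff_eq_bot (hbot : ∀ I, bot ≤ I) (hrankbot : rank bot = 0)
    (hmono : ∀ I J : α, I < J → rank I < rank J) {I : α} : rank I = 0 ↔ I = bot := by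
  refine ⟨fun hI => ?_, fun hI => hI ▸ hrankbot⟩
  by_contra hne
  have := hmono bot I ((hbot I).lt_of_ne (Ne.symm hne))
  omega

lemma filter_rank_eq_zero [Fintype α] (hbot : ∀ I, bot ≤ I) (hrankbot : rank bot = 0)
    (hmono : ∀ I J : α, I < J → rank I < rank J) :
    univ.filter (fun I => rank I = 0) = {bot} := by
  ext I
  simp [rank_eq_zero_iff_eq_bot hbot hrankbot hmono]

end Rank

section LinkEuler

variable {α : Type*} [Fintype α] [PartialOrder α] [DecidableRel ((· < ·) : α → α → Prop)]
  {rank : α → ℕ}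

/-- `f_{lk I}(-1)`: the faces of `lk_S I` correspond to the `J ≥ I`, the face `J` having
`rank J - rank I` vertices (the summand `1` is `J = I`). -/
def linkFPolyAtNegOne (rank : α → ℕ) (I : α) : ℚ :=
  1 + ∑ J ∈ univ.filter (I < ·), (-1) ^ (rank J - rank I)

lemma fPoly_eq_sum_linkFPolyAtNegOne
    (hbool : ∀ I : α, Nonempty ({J : α // J ≤ I} ≃o Finset (Fin (rank I)))) :
    ∑ I : α, (X : ℚ[X]) ^ rank I = ∑ I : α, C (linkFPolyAtNegOne rank I) * (X + 1) ^ rank I := by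
  classical
  have hle : ∀ J : α, univ.filter (· ≤ J) = insert J (univ.filter (· < J)) := fun J => by
    ext I; simp [le_iff_eq_or_lt]
  calc ∑ J : α, (X : ℚ[X]) ^ rank J
      = ∑ J : α, ((X + 1) ^ rank J
          + ∑ I ∈ univ.filter (· < J), (X + 1) ^ rank I * (-1) ^ (rank J - rank I)) := by
        refine sum_congr rfl fun J _ => ?_
        rw [pow_rank_eq_sum_le hbool, hle, sum_insert (by simp), Nat.sub_self, pow_zero, mul_one]
    _ = ∑ I : α, ((X + 1) ^ rank I
          + ∑ J ∈ univ.filter (I < ·), (X + 1) ^ rank I * (-1) ^ (rank J - rank I)) := by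
        rw [sum_add_distrib, sum_add_distrib]
        simp only [sum_filter]
        rw [sum_comm]
    _ = _ := by
        refine sum_congr rfl fun I _ => ?_
        rw [linkFPolyAtNegOne, map_add, map_one, map_sum, add_mul, one_mul, sum_mul]
        simp [mul_comm]

lemma linkFPolyAtNegOne_bot {bot : α} {n : ℕ} (hbot : ∀ I, bot ≤ I) (hrankbot : rank bot = 0)
    (hmono : ∀ I J : α, I < J → rank I < rank J) (hdim : ∀ I, rank I ≤ n) :
    linkFPolyAtNegOne rank bot
      = 1 - ∑ i ∈ range n, (-1) ^ i * ((univ.filter (fun I => rank I = i + 1)).card : ℚ) := by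
  classical
  have hlt : univ.filter (bot < ·) = univ.erase bot := by
    ext J; simp [(hbot J).lt_iff_ne, eq_comm]
  have hfPoly : linkFPolyAtNegOne rank bot = ∑ J, (-1 : ℚ) ^ rank J := by
    rw [linkFPolyAtNegOne, hlt, ← add_sum_erase _ _ (mem_univ bot), hrankbot]
    simp
  rw [hfPoly, sum_eq_sum_range_sum_rank_eq hdim, sum_range_succ',
    filter_rank_eq_zero hbot hrankbot hmono, sum_singleton, hrankbot, pow_zero, add_comm,
    sub_eq_add_neg, ← sum_neg_distrib]
  congr 1
  refine sum_congr rfl fun i _ => ?_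
  rw [sum_congr rfl fun J hJ => by rw [(mem_filter.1 hJ).2], sum_const, nsmul_eq_mul, pow_succ]
  ring

lemma linkFPolyAtNegOne_eq_betti {n : ℕ} {I : α} (hmono : ∀ J, I < J → rank I < rank J)
    (hIn : rank I ≤ n) (c : ℤ → ℕ) (hc : ∀ i : ℤ, i ≠ (n : ℤ) - rank I - 1 → c i = 0)
    (hEuler : (∑ J ∈ univ.filter (I < ·), (-1 : ℚ) ^ (rank J - rank I - 1)) - 1
      = -(c (-1) : ℚ) + ∑ i ∈ range (n + 1), (-1 : ℚ) ^ i * (c i : ℚ)) :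
    linkFPolyAtNegOne rank I = (-1) ^ (n + rank I) * c ((n : ℤ) - rank I - 1) := by
  have hshift : ∑ J ∈ univ.filter (I < ·), (-1 : ℚ) ^ (rank J - rank I)
      = -∑ J ∈ univ.filter (I < ·), (-1 : ℚ) ^ (rank J - rank I - 1) := by
    rw [← sum_neg_distrib]
    refine sum_congr rfl fun J hJ => ?_
    have := hmono J (mem_filter.1 hJ).2
    rw [show rank J - rank I = rank J - rank I - 1 + 1 by omega, pow_succ, Nat.add_sub_cancel]
    ring
  have hlink : linkFPolyAtNegOne rank I
      = c (-1) - ∑ i ∈ range (n + 1), (-1 : ℚ) ^ i * (c i : ℚ) := by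
    rw [linkFPolyAtNegOne, hshift]
    linarith
  have hcast : ((n - rank I : ℕ) : ℤ) - 1 = (n : ℤ) - rank I - 1 := by omega
  rw [hlink, sub_alternating_sum_eq_of_concentrated c (m := n - rank I) (by omega)
    (hcast ▸ hc), hcast, show n + rank I = n - rank I + 2 * rank I by omega, pow_add, pow_mul]
  simp

end LinkEuler

theorem buchsbaum_fpoly_formula_general {α : Type} [Fintype α] [PartialOrder α]
    [DecidableRel ((· < ·) : α → α → Prop)]
    (rank : α → ℕ) (bot : α) (hbot : ∀ I, bot ≤ I) (hrankbot : rank bot = 0)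
    (hbool : ∀ I : α, Nonempty ({J : α // J ≤ I} ≃o Finset (Fin (rank I))))
    (hmono : ∀ I J : α, I < J → rank I < rank J)
    (n : ℕ)
    (hdim : ∀ I, rank I ≤ n)
    (b : α → ℤ → ℕ)
    (hBuch : ∀ I, I ≠ bot → ∀ i : ℤ, i ≠ (n : ℤ) - (rank I : ℤ) - 1 → b I i = 0)
    (hEuler : ∀ I, I ≠ bot →
      (∑ J ∈ Finset.univ.filter (fun J : α => I < J), (-1 : ℚ) ^ (rank J - rank I - 1)) - 1
        = -(b I (-1) : ℚ) + ∑ i ∈ range (n + 1), (-1 : ℚ) ^ i * (b I (i : ℤ) : ℚ)) :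
    (∑ I : α, (X : Polynomial ℚ) ^ (rank I))
      = C (1 - ∑ i ∈ range n, (-1 : ℚ) ^ i *
            ((Finset.univ.filter (fun I : α => rank I = i + 1)).card : ℚ))
        + C ((-1 : ℚ) ^ n) *
            ∑ k ∈ range n,
              C ((∑ I ∈ Finset.univ.filter (fun I : α => rank I = k + 1),
                    (b I ((n : ℤ) - (rank I : ℤ) - 1) : ℚ)))
                * (-X - 1) ^ (k + 1) := by
  have hblock : ∀ k ∈ range n,
      ∑ I ∈ univ.filter (fun I => rank I = k + 1),
          C (linkFPolyAtNegOne rank I) * (X + 1) ^ rank I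
        = C ((-1 : ℚ) ^ n) * (C (∑ I ∈ univ.filter (fun I => rank I = k + 1),
            (b I ((n : ℤ) - rank I - 1) : ℚ)) * (-X - 1) ^ (k + 1)) := by
    intro k _
    rw [map_sum, sum_mul, mul_sum]
    refine sum_congr rfl fun I hI => ?_
    have hrank : rank I = k + 1 := (mem_filter.1 hI).2
    have hIbot : I ≠ bot := by rintro rfl; omega
    rw [linkFPolyAtNegOne_eq_betti (hmono I) (hdim I) (b I) (hBuch I hIbot) (hEuler I hIbot),
      hrank, show (-X - 1 : ℚ[X]) = -(X + 1) by ring, neg_pow (X + 1 : ℚ[X])]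
    simp only [map_mul, map_pow, map_neg, map_one]
    ring
  rw [fPoly_eq_sum_linkFPolyAtNegOne hbool, sum_eq_sum_range_sum_rank_eq hdim, sum_range_succ',
    sum_congr rfl hblock, ← mul_sum, filter_rank_eq_zero hbot hrankbot hmono, sum_singleton,
    hrankbot, pow_zero, mul_one, linkFPolyAtNegOne_bot hbot hrankbot hmono hdim, add_comm]

/-- Let `S` be a Buchsbaum simplicial poset of dimension `n-1`: for every nonempty `I ∈ S`
the reduced Betti numbers `b I i = dim H~_i(lk_S I)` vanish for `i ≠ n - 1 - |I|`, and
they satisfy the Euler–Poincaré relation `χ(lk_S I) - 1 = -b I (-1) + ∑_{i ≥ 0} (-1)^i b I i`.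
Put `f~_k(S) = ∑_{dim I = k} dim H~_{n-1-|I|}(lk_S I)`.  Then the `f`-polynomial satisfies
`f_S(t) = (1 - χ(S)) + (-1)^n ∑_{k ≥ 0} f~_k(S) (-t-1)^{k+1}`. -/
theorem buchsbaum_fpoly_formula {α : Type} [Fintype α] [PartialOrder α] [DecidableEq α]
    [DecidableRel ((· < ·) : α → α → Prop)]
    (rank : α → ℕ) (bot : α) (hbot : ∀ I, bot ≤ I) (hrankbot : rank bot = 0)
    (hbool : ∀ I : α, Nonempty ({J : α // J ≤ I} ≃o Finset (Fin (rank I))))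
    (hmono : ∀ I J : α, I < J → rank I < rank J)
    (n : ℕ)
    (hdim : ∀ I, rank I ≤ n)
    (hdimtop : ∃ I, rank I = n)
    (b : α → ℤ → ℕ)
    (hBuch : ∀ I, I ≠ bot → ∀ i : ℤ, i ≠ (n : ℤ) - (rank I : ℤ) - 1 → b I i = 0)
    (hEuler : ∀ I, I ≠ bot →
      (∑ J ∈ Finset.univ.filter (fun J : α => I < J), (-1 : ℚ) ^ (rank J - rank I - 1)) - 1
        = -(b I (-1) : ℚ) + ∑ i ∈ range (n + 1), (-1 : ℚ) ^ i * (b I (i : ℤ) : ℚ)) :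
    (∑ I : α, (X : Polynomial ℚ) ^ (rank I))
      = C (1 - ∑ i ∈ range n, (-1 : ℚ) ^ i *
            ((Finset.univ.filter (fun I : α => rank I = i + 1)).card : ℚ))
        + C ((-1 : ℚ) ^ n) *
            ∑ k ∈ range n,
              C ((∑ I ∈ Finset.univ.filter (fun I : α => rank I = k + 1),
                    (b I ((n : ℤ) - (rank I : ℤ) - 1) : ℚ)))
                * (-X - 1) ^ (k + 1) :=
  buchsbaum_fpoly_formula_general rank bot hbot hrankbot hbool hmono n hdim b hBuch hEuler
end
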